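/- Let e be a finite set of r ≥ 1 nodes and b a positive natural number. Form the cardinality-based gadget: a directed graph on node set V' = e ∪ {e', e''} with two auxiliary nodes, having for each v ∈ e a directed edge (v, e') of weight 1 and a directed edge (e'', v) of weight 1, and a directed edge (e', e'') of weight b. Then for every S ⊆ e, the gadget splitting function satisfies ŵ(S) = min over T ⊆ V' with T ∩ e = S of cut(T) = min { |S|, |e \ S|, b }, where cut(T) = Σ_{i ∈ T, j ∉ T} (weight of directed edge from i to j). -/

import Mathlib

/-- The directed cut function of a weighted directed graph on vertex set `α`. -/
def dirCut {α : Type*} [Fintype α] [DecidableEq α] (w : α → α → ℝ) (T : Finset α) : ℝ :=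
  ∑ i ∈ T, ∑ j ∈ Tᶜ, w i j

/-- Edge weights of the cardinality-based gadget on node set `β ⊕ Fin 2`,
where `Sum.inr 0` is the auxiliary node `e'` and `Sum.inr 1` is `e''`:
each `v ∈ e` has an edge of weight 1 to `e'`, `e''` has an edge of weight 1 to each `v ∈ e`,
and there is an edge of weight `b` from `e'` to `e''`. -/
def cbWeight {β : Type*} (b : ℕ) : (β ⊕ Fin 2) → (β ⊕ Fin 2) → ℝ
  | Sum.inl _, Sum.inr j => if j = 0 then 1 else 0
  | Sum.inr i, Sum.inl _ => if i = 1 then 1 else 0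
  | Sum.inr i, Sum.inr j => if i = 0 ∧ j = 1 then (b : ℝ) else 0
  | Sum.inl _, Sum.inl _ => 0

/-! Once `T ∩ e = S` is fixed, only the membership of the auxiliary nodes `e'`, `e''` in `T` is
free. Its four choices give the cut values `|S|` (neither), `b` (only `e'`), `|e \ S|` (both)
and `|S| + |e \ S|` (only `e''`), whose minimum is `min {|S|, |e \ S|, b}`. -/

open Finset

lemma dirCut_eq_sum_ite {α : Type*} [Fintype α] [DecidableEq α] (w : α → α → ℝ)
    (T : Finset α) :
    dirCut w T = ∑ i, ∑ j, if i ∈ T ∧ j ∉ T then w i j else 0 := by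
  simp only [dirCut, ← mem_compl, ite_and, sum_ite_irrel, sum_ite_mem, univ_inter, sum_const_zero]

section CardinalityBasedGadget

variable {β : Type*} [Fintype β] [DecidableEq β]

lemma dirCut_cbWeight (b : ℕ) {S : Finset β} {T : Finset (β ⊕ Fin 2)}
    (hT : ∀ v : β, Sum.inl v ∈ T ↔ v ∈ S) :
    dirCut (cbWeight b) T =
      (if Sum.inr 0 ∈ T then 0 else (#S : ℝ)) +
      (if Sum.inr 0 ∈ T ∧ Sum.inr 1 ∉ T then (b : ℝ) else 0) +
      (if Sum.inr 1 ∈ T then (#Sᶜ : ℝ) else 0) := by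
  rw [dirCut_eq_sum_ite]
  simp only [Fintype.sum_sum_type, Fin.sum_univ_two, cbWeight, hT]
  by_cases h0 : (Sum.inr 0 : β ⊕ Fin 2) ∈ T <;> by_cases h1 : (Sum.inr 1 : β ⊕ Fin 2) ∈ T <;>
    simp [h0, h1, ← mem_compl]

lemma le_dirCut_cbWeight (b : ℕ) {S : Finset β} {T : Finset (β ⊕ Fin 2)}
    (hT : ∀ v : β, Sum.inl v ∈ T ↔ v ∈ S) :
    min (min (#S : ℝ) (#Sᶜ : ℝ)) (b : ℝ) ≤ dirCut (cbWeight b) T := by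
  rw [dirCut_cbWeight b hT]
  by_cases h0 : (Sum.inr 0 : β ⊕ Fin 2) ∈ T <;> by_cases h1 : (Sum.inr 1 : β ⊕ Fin 2) ∈ T <;>
    simp [h0, h1]

lemma exists_dirCut_cbWeight_eq (b : ℕ) (S : Finset β) {r : ℝ}
    (hr : r = #S ∨ r = #Sᶜ ∨ r = b) :
    ∃ T : Finset (β ⊕ Fin 2), (∀ v : β, Sum.inl v ∈ T ↔ v ∈ S) ∧ dirCut (cbWeight b) T = r := by
  obtain rfl | rfl | rfl := hr
  · exact ⟨S.map .inl, by simp, by rw [dirCut_cbWeight b (S := S) (by simp)]; simp⟩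
  · exact ⟨insert (.inr 0) (insert (.inr 1) (S.map .inl)), by simp,
      by rw [dirCut_cbWeight b (S := S) (by simp)]; simp⟩
  · exact ⟨insert (.inr 0) (S.map .inl), by simp, by rw [dirCut_cbWeight b (S := S) (by simp)]; simp⟩

end CardinalityBasedGadget

theorem stmt_2_general {β : Type*} [Fintype β] [DecidableEq β]
    (b : ℕ) (S : Finset β) :
    IsLeast {r : ℝ | ∃ T : Finset (β ⊕ Fin 2),
        (∀ v : β, Sum.inl v ∈ T ↔ v ∈ S) ∧ dirCut (cbWeight b) T = r}
      (min (min (S.card : ℝ) ((Sᶜ : Finset β).card : ℝ)) (b : ℝ)) := by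
  refine ⟨exists_dirCut_cbWeight_eq b S ?_, ?_⟩
  · rcases min_choice (min (#S : ℝ) (#Sᶜ : ℝ)) b with h | h <;> rw [h]
    · rcases min_choice (#S : ℝ) (#Sᶜ : ℝ) with h' | h' <;> simp [h']
    · simp
  · rintro r ⟨T, hT, rfl⟩
    exact le_dirCut_cbWeight b hT

/-- the gadget splitting function of the CB-gadget with parameter `b`
is `ŵ(S) = min {|S|, |e \ S|, b}`. -/
theorem stmt_2 {β : Type*} [Fintype β] [DecidableEq β] (hβ : 1 ≤ Fintype.card β)
    (b : ℕ) (hb : 0 < b) (S : Finset β) :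
    IsLeast {r : ℝ | ∃ T : Finset (β ⊕ Fin 2),
        (∀ v : β, Sum.inl v ∈ T ↔ v ∈ S) ∧ dirCut (cbWeight b) T = r}
      (min (min (S.card : ℝ) ((Sᶜ : Finset β).card : ℝ)) (b : ℝ)) :=
  stmt_2_general b S
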